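/- arXiv:1407.8068 — 3 statements merged into one kernel-verified Lean document; each statement's English description precedes it below -/
import Mathlib

section
/- Let (λ_N) be a sequence with 0 < λ_N < 1 and λ_N·√N → ∞ as N → ∞, and fix s₀ > 0. Then there exists N₀ such that for every N ≥ N₀, every integer n with 1 ≤ n ≤ N−1, and every (x, ξ) ∈ {−1,1}^n × {−1,1}: S_n^{(N)}(x) > 0, (1−λ_N)·S_n^{(N)}(x) ≤ S_{n+1}^{(N)}(x, ξ), and (1−λ_N)·S_{n+1}^{(N)}(x, ξ) ≤ S_n^{(N)}(x). (Consequently every 1-step λ_N-self-financing strategy has nonpositive terminal liquidation value, so there is neither a 1-step asymptotic arbitrage of the first kind nor of the second kind with transaction costs λ_N.) -/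
open MeasureTheory

/-- The normalizing constant `c_H`. -/
noncomputable def cH (H : ℝ) : ℝ :=
  Real.sqrt (2 * H * Real.Gamma (3/2 - H) / (Real.Gamma (H + 1/2) * Real.Gamma (2 - 2*H)))

/-- The coefficient `j_n(i)` of the disturbed random walk. -/
noncomputable def jn (H σ : ℝ) (n i : ℕ) : ℝ :=
  σ * cH H * (H - 1/2) *
    ∫ x in ((i : ℝ) - 1)..(i : ℝ),
      x ^ ((1:ℝ)/2 - H) *
        ∫ v in (0:ℝ)..1, (v + n - 1) ^ (H - 1/2) * (v + n - 1 - x) ^ (H - 3/2)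

/-- The coefficient `g_n` of the disturbed random walk. -/
noncomputable def gn (H σ : ℝ) (n : ℕ) : ℝ :=
  σ * cH H * (H - 1/2) *
    ∫ x in ((n : ℝ) - 1)..(n : ℝ),
      x ^ ((1:ℝ)/2 - H) * ((n : ℝ) - x) ^ (H - 1/2) *
        ∫ y in (0:ℝ)..1, (y * ((n : ℝ) - x) + x) ^ (H - 1/2) * y ^ (H - 3/2)

/-- The stock price in the `N`-fractional binary market after `n` steps along the
sign path `x` (indexed from 1):
`S_n^{(N)}(x) = s₀ ∏_{k=1}^n (1 + (∑_{i=1}^{k-1} j_k(i) x_i + g_k x_k)/N^H)`. -/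
noncomputable def Sp (H σ : ℝ) (N : ℕ) (s₀ : ℝ) (n : ℕ) (x : ℕ → ℝ) : ℝ :=
  s₀ * ∏ k ∈ Finset.Icc 1 n,
    (1 + ((∑ i ∈ Finset.Icc 1 (k - 1), jn H σ k i * x i) + gn H σ k * x k) / (N : ℝ) ^ H)

/-!
Write `S_k = S_{k-1} (1 + D_k / N^H)` with `D_k = ∑_{i<k} j_k(i) x_i + g_k x_k`. Bounding the
inner integrals crudely, `∑_i |j_k(i)| ≤ K k^{H-1/2} ∫_0^{k-1} x^{1/2-H} (k-1-x)^{H-3/2} dx`, a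
Beta-type integral whose exponents add up to `-1` and which is therefore independent of `k`;
likewise `|g_k| ≤ K' k^{H-1/2}`. So `|D_k| ≤ C k^{H-1/2}` and, for `k ≤ N`,
`|D_k / N^H| ≤ C / √N ≤ λ_N` as soon as `λ_N √N ≥ C`. A step factor `1 + d` with
`|d| ≤ λ_N < 1` keeps the price positive and moves it by at most the transaction cost.
-/

open Set

theorem intervalIntegral.integral_mono_of_nonneg_of_le_Ioo {f g : ℝ → ℝ} {a b : ℝ}
    (hab : a ≤ b) (hg : IntervalIntegrable g volume a b) (hf : ∀ x ∈ Ioo a b, 0 ≤ f x)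
    (hfg : ∀ x ∈ Ioo a b, f x ≤ g x) :
    ∫ x in a..b, f x ≤ ∫ x in a..b, g x := by
  simp only [intervalIntegral.integral_of_le hab, integral_Ioc_eq_integral_Ioo]
  have hmem : ∀ᵐ x ∂volume.restrict (Ioo a b), x ∈ Ioo a b :=
    ae_restrict_mem measurableSet_Ioo
  exact integral_mono_of_nonneg (hmem.mono hf) (hg.1.mono_set Ioo_subset_Ioc_self)
    (hmem.mono hfg)

theorem sum_Icc_integral_unit_intervals (f : ℝ → ℝ) (m : ℕ)
    (hf : IntervalIntegrable f volume 0 m) :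
    ∑ i ∈ Finset.Icc 1 m, ∫ x in (i:ℝ) - 1..i, f x = ∫ x in (0:ℝ)..m, f x := by
  induction m with
  | zero => simp
  | succ m ih =>
    have hm : IntervalIntegrable f volume 0 m := hf.mono_set (by
      rw [uIcc_of_le (by positivity), uIcc_of_le (by positivity)]
      exact Icc_subset_Icc le_rfl (by push_cast; linarith))
    rw [Finset.sum_Icc_succ_top (by omega), ih hm, Nat.cast_succ, add_sub_cancel_right,
      intervalIntegral.integral_add_adjacent_intervals hm]
    exact hf.mono_set (by
      rw [uIcc_of_le (by linarith), uIcc_of_le (by positivity)]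
      exact Icc_subset_Icc (by positivity) (by push_cast; linarith))

theorem integral_rpow_unit_interval_le {a r : ℝ} (ha : 0 ≤ a) (hr : -1 < r) (hr0 : r ≤ 0) :
    ∫ x in a..a + 1, x ^ r ≤ 1 / (r + 1) := by
  have hsub : (a + 1) ^ (r + 1) ≤ a ^ (r + 1) + 1 := by
    simpa using Real.rpow_add_le_add_rpow ha zero_le_one (by linarith) (by linarith)
  rw [integral_rpow (Or.inl hr)]
  exact div_le_div_of_nonneg_right (by linarith) (by linarith)

section BetaKernel

variable {a r s : ℝ}

theorem intervalIntegrable_rpow_mul_sub_rpow_half (ha : 0 < a) (hr : -1 < r) :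
    IntervalIntegrable (fun x => x ^ r * (a - x) ^ s) volume 0 (a / 2) := by
  refine (intervalIntegral.intervalIntegrable_rpow' hr).mul_continuousOn fun x hx => ?_
  rw [uIcc_of_le (by linarith)] at hx
  have hx0 : a - x ≠ 0 := by linarith [hx.2]
  exact (ContinuousAt.rpow_const (f := fun x => a - x) (by fun_prop)
    (Or.inl hx0)).continuousWithinAt

theorem intervalIntegrable_rpow_mul_sub_rpow (ha : 0 < a) (hr : -1 < r) (hs : -1 < s) :
    IntervalIntegrable (fun x => x ^ r * (a - x) ^ s) volume 0 a := by
  have hright := (intervalIntegrable_rpow_mul_sub_rpow_half (s := r) ha hs).comp_sub_left a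
  simp only [sub_sub_cancel, sub_zero, show a - a / 2 = a / 2 by ring] at hright
  exact (intervalIntegrable_rpow_mul_sub_rpow_half ha hr).trans
    (hright.symm.congr fun x _ => by simp only [mul_comm])

theorem integral_rpow_mul_sub_rpow_half_le (ha : 0 < a) (hr : -1 < r) (hs : s ≤ 0) :
    ∫ x in (0:ℝ)..a / 2, x ^ r * (a - x) ^ s ≤ (a / 2) ^ (r + s + 1) / (r + 1) :=
  calc ∫ x in (0:ℝ)..a / 2, x ^ r * (a - x) ^ s
      ≤ ∫ x in (0:ℝ)..a / 2, x ^ r * (a / 2) ^ s := by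
        refine intervalIntegral.integral_mono_of_nonneg_of_le_Ioo (by linarith)
          ((intervalIntegral.intervalIntegrable_rpow' hr).mul_const _) (fun x hx => ?_)
          (fun x hx => ?_)
        · exact mul_nonneg (Real.rpow_nonneg hx.1.le _) (Real.rpow_nonneg (by linarith [hx.2]) _)
        · exact mul_le_mul_of_nonneg_left
            (Real.rpow_le_rpow_of_nonpos (by linarith) (by linarith [hx.2]) hs)
            (Real.rpow_nonneg hx.1.le _)
    _ = (a / 2) ^ (r + s + 1) / (r + 1) := by
        rw [intervalIntegral.integral_mul_const, integral_rpow (Or.inl hr),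
          Real.zero_rpow (by linarith), sub_zero, div_mul_eq_mul_div,
          ← Real.rpow_add (by linarith)]
        ring_nf

theorem integral_rpow_mul_sub_rpow_le (ha : 0 < a) (hr : -1 < r) (hr0 : r ≤ 0) (hs : -1 < s)
    (hs0 : s ≤ 0) :
    ∫ x in (0:ℝ)..a, x ^ r * (a - x) ^ s
      ≤ (a / 2) ^ (r + s + 1) * (1 / (r + 1) + 1 / (s + 1)) := by
  have hreflect : ∫ x in a / 2..a, x ^ r * (a - x) ^ s
      = ∫ x in (0:ℝ)..a / 2, x ^ s * (a - x) ^ r := by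
    have := intervalIntegral.integral_comp_sub_left (a := 0) (b := a / 2)
      (fun x => x ^ r * (a - x) ^ s) a
    simp only [sub_sub_cancel, sub_zero, show a - a / 2 = a / 2 by ring] at this
    rw [← this]
    congr 1 with x
    ring
  have hright : IntervalIntegrable (fun x => x ^ r * (a - x) ^ s) volume (a / 2) a :=
    (intervalIntegrable_rpow_mul_sub_rpow ha hr hs).mono_set (by
      rw [uIcc_of_le (by linarith), uIcc_of_le ha.le]
      exact Icc_subset_Icc (by linarith) le_rfl)
  rw [← intervalIntegral.integral_add_adjacent_intervals
    (intervalIntegrable_rpow_mul_sub_rpow_half ha hr) hright, hreflect]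
  have hleft := integral_rpow_mul_sub_rpow_half_le ha hr hs0
  have hright := integral_rpow_mul_sub_rpow_half_le ha hs hr0
  rw [show s + r + 1 = r + s + 1 by ring] at hright
  calc _ ≤ (a / 2) ^ (r + s + 1) / (r + 1) + (a / 2) ^ (r + s + 1) / (s + 1) :=
        add_le_add hleft hright
    _ = _ := by ring

end BetaKernel

section Coefficients

variable {H : ℝ}

theorem integral_jn_kernel_nonneg {k : ℕ} {x : ℝ} (hx0 : 0 ≤ x) (hxk : x ≤ (k:ℝ) - 1) :
    0 ≤ ∫ v in (0:ℝ)..1, (v + k - 1) ^ (H - 1/2) * (v + k - 1 - x) ^ (H - 3/2) :=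
  intervalIntegral.integral_nonneg zero_le_one fun v hv =>
    mul_nonneg (Real.rpow_nonneg (by linarith [hv.1]) _)
      (Real.rpow_nonneg (by linarith [hv.1]) _)

theorem integral_jn_kernel_le (hH₁ : 1/2 ≤ H) (hH₂ : H ≤ 3/2) {k : ℕ} {x : ℝ} (hx0 : 0 ≤ x)
    (hxk : x < (k:ℝ) - 1) :
    ∫ v in (0:ℝ)..1, (v + k - 1) ^ (H - 1/2) * (v + k - 1 - x) ^ (H - 3/2)
      ≤ (k:ℝ) ^ (H - 1/2) * ((k:ℝ) - 1 - x) ^ (H - 3/2) := by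
  have hconst := intervalIntegral.integral_const (a := (0:ℝ)) (b := 1)
    ((k:ℝ) ^ (H - 1/2) * ((k:ℝ) - 1 - x) ^ (H - 3/2))
  rw [sub_zero, one_smul] at hconst
  rw [← hconst]
  refine intervalIntegral.integral_mono_of_nonneg_of_le_Ioo zero_le_one
    intervalIntegrable_const (fun v hv => ?_) (fun v hv => ?_)
  · exact mul_nonneg (Real.rpow_nonneg (by linarith [hv.1]) _)
      (Real.rpow_nonneg (by linarith [hv.1]) _)
  · exact mul_le_mul (Real.rpow_le_rpow (by linarith [hv.1]) (by linarith [hv.2]) (by linarith))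
      (Real.rpow_le_rpow_of_nonpos (by linarith) (by linarith [hv.1]) (by linarith))
      (Real.rpow_nonneg (by linarith [hv.1]) _) (Real.rpow_nonneg (by positivity) _)

theorem abs_jn_le (hH₁ : 1/2 < H) (hH₂ : H < 3/2) (σ : ℝ) {k i : ℕ} (hi : 1 ≤ i)
    (hik : i + 1 ≤ k) :
    |jn H σ k i| ≤ |σ * cH H * (H - 1/2)| * (k:ℝ) ^ (H - 1/2) *
      ∫ x in (i:ℝ) - 1..i, x ^ ((1:ℝ)/2 - H) * ((k:ℝ) - 1 - x) ^ (H - 3/2) := by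
  have hi1 : (1:ℝ) ≤ i := by exact_mod_cast hi
  have hik1 : (i:ℝ) + 1 ≤ k := by exact_mod_cast hik
  have hint : IntervalIntegrable (fun x => x ^ ((1:ℝ)/2 - H) * ((k:ℝ) - 1 - x) ^ (H - 3/2))
      volume ((i:ℝ) - 1) i :=
    (intervalIntegrable_rpow_mul_sub_rpow (by linarith) (by linarith) (by linarith)).mono_set (by
      rw [uIcc_of_le (by linarith), uIcc_of_le (by linarith)]
      exact Icc_subset_Icc (by linarith) (by linarith))
  have hnonneg : ∀ x ∈ Icc ((i:ℝ) - 1) i, 0 ≤ x ^ ((1:ℝ)/2 - H) *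
      ∫ v in (0:ℝ)..1, (v + k - 1) ^ (H - 1/2) * (v + k - 1 - x) ^ (H - 3/2) := fun x hx =>
    mul_nonneg (Real.rpow_nonneg (by linarith [hx.1]) _)
      (integral_jn_kernel_nonneg (by linarith [hx.1]) (by linarith [hx.2]))
  rw [jn, abs_mul, abs_of_nonneg (intervalIntegral.integral_nonneg (by linarith) hnonneg),
    mul_assoc |σ * cH H * (H - 1/2)|,
    ← intervalIntegral.integral_const_mul ((k:ℝ) ^ (H - 1/2))]
  refine mul_le_mul_of_nonneg_left ?_ (abs_nonneg _)
  refine intervalIntegral.integral_mono_of_nonneg_of_le_Ioo (by linarith) (hint.const_mul _)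
    (fun x hx => hnonneg x (Ioo_subset_Icc_self hx)) (fun x hx => ?_)
  calc x ^ ((1:ℝ)/2 - H) *
        ∫ v in (0:ℝ)..1, (v + k - 1) ^ (H - 1/2) * (v + k - 1 - x) ^ (H - 3/2)
      ≤ x ^ ((1:ℝ)/2 - H) * ((k:ℝ) ^ (H - 1/2) * ((k:ℝ) - 1 - x) ^ (H - 3/2)) :=
        mul_le_mul_of_nonneg_left
          (integral_jn_kernel_le hH₁.le hH₂.le (by linarith [hx.1]) (by linarith [hx.2]))
          (Real.rpow_nonneg (by linarith [hx.1]) _)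
    _ = _ := by ring

theorem sum_abs_jn_le (hH₁ : 1/2 < H) (hH₂ : H < 3/2) (σ : ℝ) (k : ℕ) :
    ∑ i ∈ Finset.Icc 1 (k - 1), |jn H σ k i|
      ≤ |σ * cH H * (H - 1/2)| * (k:ℝ) ^ (H - 1/2) * (1 / (3/2 - H) + 1 / (H - 1/2)) := by
  have hK : 0 ≤ |σ * cH H * (H - 1/2)| * (k:ℝ) ^ (H - 1/2) := by positivity
  have hB : 0 ≤ 1 / (3/2 - H) + 1 / (H - 1/2) :=
    add_nonneg (one_div_nonneg.2 (by linarith)) (one_div_nonneg.2 (by linarith))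
  rcases Nat.lt_or_ge k 2 with hk | hk
  · rw [Finset.Icc_eq_empty (by omega), Finset.sum_empty]
    exact mul_nonneg hK hB
  have hcast : ((k - 1 : ℕ) : ℝ) = (k:ℝ) - 1 := by rw [Nat.cast_sub (by omega), Nat.cast_one]
  have ha : (0:ℝ) < (k:ℝ) - 1 := by
    rw [← hcast]; exact_mod_cast (by omega : 0 < k - 1)
  have hbeta := integral_rpow_mul_sub_rpow_le ha (r := (1:ℝ)/2 - H) (s := H - 3/2)
    (by linarith) (by linarith) (by linarith) (by linarith)
  rw [show (1:ℝ)/2 - H + (H - 3/2) + 1 = 0 by ring, Real.rpow_zero, one_mul,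
    show (1:ℝ)/2 - H + 1 = 3/2 - H by ring, show H - 3/2 + 1 = H - 1/2 by ring] at hbeta
  calc ∑ i ∈ Finset.Icc 1 (k - 1), |jn H σ k i|
      ≤ ∑ i ∈ Finset.Icc 1 (k - 1), |σ * cH H * (H - 1/2)| * (k:ℝ) ^ (H - 1/2) *
          ∫ x in (i:ℝ) - 1..i, x ^ ((1:ℝ)/2 - H) * ((k:ℝ) - 1 - x) ^ (H - 3/2) :=
        Finset.sum_le_sum fun i hi => abs_jn_le hH₁ hH₂ σ (Finset.mem_Icc.1 hi).1
          (by have := (Finset.mem_Icc.1 hi).2; omega)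
    _ = |σ * cH H * (H - 1/2)| * (k:ℝ) ^ (H - 1/2) *
          ∫ x in (0:ℝ)..(k:ℝ) - 1, x ^ ((1:ℝ)/2 - H) * ((k:ℝ) - 1 - x) ^ (H - 3/2) := by
        rw [← Finset.mul_sum, sum_Icc_integral_unit_intervals _ _ (by
          rw [hcast]; exact intervalIntegrable_rpow_mul_sub_rpow ha (by linarith) (by linarith)),
          hcast]
    _ ≤ _ := mul_le_mul_of_nonneg_left hbeta hK

theorem integral_gn_kernel_nonneg {k : ℕ} {x : ℝ} (hx0 : 0 ≤ x) (hxk : x ≤ k) :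
    0 ≤ ∫ y in (0:ℝ)..1, (y * ((k:ℝ) - x) + x) ^ (H - 1/2) * y ^ (H - 3/2) :=
  intervalIntegral.integral_nonneg zero_le_one fun y hy =>
    mul_nonneg (Real.rpow_nonneg (by nlinarith [hy.1]) _) (Real.rpow_nonneg hy.1 _)

theorem integral_gn_kernel_le (hH : 1/2 < H) {k : ℕ} {x : ℝ} (hx0 : 0 ≤ x) (hxk : x ≤ k) :
    ∫ y in (0:ℝ)..1, (y * ((k:ℝ) - x) + x) ^ (H - 1/2) * y ^ (H - 3/2)
      ≤ (k:ℝ) ^ (H - 1/2) / (H - 1/2) :=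
  calc ∫ y in (0:ℝ)..1, (y * ((k:ℝ) - x) + x) ^ (H - 1/2) * y ^ (H - 3/2)
      ≤ ∫ y in (0:ℝ)..1, (k:ℝ) ^ (H - 1/2) * y ^ (H - 3/2) := by
        refine intervalIntegral.integral_mono_of_nonneg_of_le_Ioo zero_le_one
          ((intervalIntegral.intervalIntegrable_rpow' (by linarith)).const_mul _)
          (fun y hy => ?_) (fun y hy => ?_)
        · exact mul_nonneg (Real.rpow_nonneg (by nlinarith [hy.1]) _) (Real.rpow_nonneg hy.1.le _)
        · refine mul_le_mul_of_nonneg_right (Real.rpow_le_rpow (by nlinarith [hy.1]) ?_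
            (by linarith)) (Real.rpow_nonneg hy.1.le _)
          nlinarith [hy.2]
    _ = (k:ℝ) ^ (H - 1/2) / (H - 1/2) := by
        rw [intervalIntegral.integral_const_mul, integral_rpow (Or.inl (by linarith)),
          Real.one_rpow, Real.zero_rpow (by linarith), show H - 3/2 + 1 = H - 1/2 by ring]
        ring

theorem abs_gn_le (hH₁ : 1/2 < H) (hH₂ : H < 3/2) (σ : ℝ) {k : ℕ} (hk : 1 ≤ k) :
    |gn H σ k| ≤ |σ * cH H * (H - 1/2)| * (k:ℝ) ^ (H - 1/2) * (1 / (3/2 - H) / (H - 1/2)) := by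
  have hk1 : (1:ℝ) ≤ k := by exact_mod_cast hk
  have hunit := integral_rpow_unit_interval_le (a := (k:ℝ) - 1) (r := (1:ℝ)/2 - H)
    (by linarith) (by linarith) (by linarith)
  rw [sub_add_cancel, show (1:ℝ)/2 - H + 1 = 3/2 - H by ring] at hunit
  have hnonneg : ∀ x ∈ Icc ((k:ℝ) - 1) k, 0 ≤ x ^ ((1:ℝ)/2 - H) * ((k:ℝ) - x) ^ (H - 1/2) *
      ∫ y in (0:ℝ)..1, (y * ((k:ℝ) - x) + x) ^ (H - 1/2) * y ^ (H - 3/2) := fun x hx =>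
    mul_nonneg (mul_nonneg (Real.rpow_nonneg (by linarith [hx.1]) _)
      (Real.rpow_nonneg (by linarith [hx.2]) _))
      (integral_gn_kernel_nonneg (by linarith [hx.1]) hx.2)
  rw [gn, abs_mul, abs_of_nonneg (intervalIntegral.integral_nonneg (by linarith) hnonneg),
    mul_assoc |σ * cH H * (H - 1/2)|]
  refine mul_le_mul_of_nonneg_left ?_ (abs_nonneg _)
  calc ∫ x in (k:ℝ) - 1..k, x ^ ((1:ℝ)/2 - H) * ((k:ℝ) - x) ^ (H - 1/2) *
        ∫ y in (0:ℝ)..1, (y * ((k:ℝ) - x) + x) ^ (H - 1/2) * y ^ (H - 3/2)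
      ≤ ∫ x in (k:ℝ) - 1..k, x ^ ((1:ℝ)/2 - H) * ((k:ℝ) ^ (H - 1/2) / (H - 1/2)) := by
        refine intervalIntegral.integral_mono_of_nonneg_of_le_Ioo (by linarith)
          ((intervalIntegral.intervalIntegrable_rpow' (by linarith)).mul_const _)
          (fun x hx => hnonneg x (Ioo_subset_Icc_self hx)) (fun x hx => ?_)
        have hx0 : 0 ≤ x := by linarith [hx.1]
        calc _ ≤ x ^ ((1:ℝ)/2 - H) * 1 * ((k:ℝ) ^ (H - 1/2) / (H - 1/2)) :=
              mul_le_mul (mul_le_mul_of_nonneg_left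
                (Real.rpow_le_one (by linarith [hx.2]) (by linarith [hx.1]) (by linarith))
                (Real.rpow_nonneg hx0 _))
                (integral_gn_kernel_le hH₁ hx0 hx.2.le)
                (integral_gn_kernel_nonneg hx0 hx.2.le) (by positivity)
          _ = _ := by ring
    _ ≤ (k:ℝ) ^ (H - 1/2) * (1 / (3/2 - H) / (H - 1/2)) := by
        rw [intervalIntegral.integral_mul_const]
        calc _ ≤ 1 / (3/2 - H) * ((k:ℝ) ^ (H - 1/2) / (H - 1/2)) :=
              mul_le_mul_of_nonneg_right hunit (div_nonneg (by positivity) (by linarith))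
          _ = _ := by ring

end Coefficients

section Market

variable (H σ : ℝ)

noncomputable def walkIncrement (k : ℕ) (x : ℕ → ℝ) : ℝ :=
  (∑ i ∈ Finset.Icc 1 (k - 1), jn H σ k i * x i) + gn H σ k * x k

noncomputable def stepReturn (N k : ℕ) (x : ℕ → ℝ) : ℝ :=
  walkIncrement H σ k x / (N : ℝ) ^ H

variable {H}

theorem exists_abs_walkIncrement_le (hH₁ : 1/2 < H) (hH₂ : H < 3/2) :
    ∃ C, ∀ k : ℕ, 1 ≤ k → ∀ x : ℕ → ℝ, (∀ i, |x i| ≤ 1) →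
      |walkIncrement H σ k x| ≤ C * (k:ℝ) ^ (H - 1/2) := by
  refine ⟨|σ * cH H * (H - 1/2)| * ((1 / (3/2 - H) + 1 / (H - 1/2)) + 1 / (3/2 - H) / (H - 1/2)),
    fun k hk x hx => ?_⟩
  have habs : ∀ c i, |c * x i| ≤ |c| := fun c i => by
    rw [abs_mul]; exact mul_le_of_le_one_right (abs_nonneg c) (hx i)
  calc |walkIncrement H σ k x|
      ≤ (∑ i ∈ Finset.Icc 1 (k - 1), |jn H σ k i|) + |gn H σ k| :=
        (abs_add_le _ _).trans (add_le_add
          ((Finset.abs_sum_le_sum_abs _ _).trans (Finset.sum_le_sum fun i _ => habs _ i))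
          (habs _ k))
    _ ≤ _ := add_le_add (sum_abs_jn_le hH₁ hH₂ σ k) (abs_gn_le hH₁ hH₂ σ hk)
    _ = _ := by ring

theorem abs_stepReturn_le {C l : ℝ} (hH : 1/2 ≤ H) {N k : ℕ} (hk : 1 ≤ k) (hkN : k ≤ N)
    {x : ℕ → ℝ} (hC : |walkIncrement H σ k x| ≤ C * (k:ℝ) ^ (H - 1/2))
    (hCl : C ≤ l * Real.sqrt N) :
    |stepReturn H σ N k x| ≤ l := by
  have hN : (0:ℝ) < N := by exact_mod_cast (by omega : 0 < N)
  have hkp : (0:ℝ) < (k:ℝ) ^ (H - 1/2) := Real.rpow_pos_of_pos (by exact_mod_cast hk) _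
  have hC0 : 0 ≤ C := nonneg_of_mul_nonneg_left ((abs_nonneg _).trans hC) hkp
  rw [stepReturn, abs_div, abs_of_pos (Real.rpow_pos_of_pos hN _), div_le_iff₀ (by positivity)]
  calc _ ≤ C * (k:ℝ) ^ (H - 1/2) := hC
    _ ≤ C * (N:ℝ) ^ (H - 1/2) := by gcongr
    _ ≤ l * Real.sqrt N * (N:ℝ) ^ (H - 1/2) := by gcongr
    _ = l * (N:ℝ) ^ H := by
        rw [Real.sqrt_eq_rpow, mul_assoc, ← Real.rpow_add hN]
        ring_nf

variable (H) (N : ℕ) (s₀ : ℝ)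

theorem Sp_succ (n : ℕ) (x : ℕ → ℝ) :
    Sp H σ N s₀ (n + 1) x = Sp H σ N s₀ n x * (1 + stepReturn H σ N (n + 1) x) := by
  rw [Sp, Sp, Finset.prod_Icc_succ_top (by omega), stepReturn, walkIncrement, mul_assoc]

theorem Sp_congr (n : ℕ) {x y : ℕ → ℝ} (hxy : ∀ i ∈ Finset.Icc 1 n, x i = y i) :
    Sp H σ N s₀ n x = Sp H σ N s₀ n y := by
  have hle : ∀ k ∈ Finset.Icc 1 n, ∀ i ∈ Finset.Icc 1 k, x i = y i := fun k hk i hi =>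
    hxy i (Finset.Icc_subset_Icc le_rfl (Finset.mem_Icc.1 hk).2 hi)
  refine congrArg (s₀ * ·) (Finset.prod_congr rfl fun k hk => ?_)
  rw [hle k hk k (Finset.mem_Icc.2 ⟨(Finset.mem_Icc.1 hk).1, le_rfl⟩),
    Finset.sum_congr rfl fun i hi => by
      rw [hle k hk i (Finset.Icc_subset_Icc le_rfl (Nat.sub_le k 1) hi)]]

variable {H s₀}

theorem Sp_pos (hs₀ : 0 < s₀) {n : ℕ} {x : ℕ → ℝ}
    (hx : ∀ k ∈ Finset.Icc 1 n, |stepReturn H σ N k x| < 1) :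
    0 < Sp H σ N s₀ n x :=
  mul_pos hs₀ (Finset.prod_pos fun k hk => by
    have := neg_lt_of_abs_lt (hx k hk)
    rw [stepReturn, walkIncrement] at this
    linarith)

end Market

theorem one_sub_mul_le_mul_one_add {S d l : ℝ} (hS : 0 ≤ S) (hd : -l ≤ d) :
    (1 - l) * S ≤ S * (1 + d) := by
  nlinarith

theorem one_sub_mul_mul_one_add_le {S d l : ℝ} (hS : 0 ≤ S) (hd : d ≤ l) (hl : l ≤ 1) :
    (1 - l) * (S * (1 + d)) ≤ S := by
  have hfactor : (1 - l) * (1 + d) ≤ 1 := by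
    nlinarith [mul_nonneg (sub_nonneg.2 hl) (sub_nonneg.2 hd), sq_nonneg l]
  calc (1 - l) * (S * (1 + d)) = S * ((1 - l) * (1 + d)) := by ring
    _ ≤ S := mul_le_of_le_one_right hS hfactor

theorem no_one_step_asymptotic_arbitrage_general (H σ : ℝ) (hH : H ∈ Set.Ioo (1/2 : ℝ) 1)
    (s₀ : ℝ) (hs₀ : 0 < s₀) (lam : ℕ → ℝ)
    (hlam : ∀ N, lam N ∈ Set.Ioo (0:ℝ) 1)
    (hlim : Filter.Tendsto (fun N : ℕ => lam N * Real.sqrt N) Filter.atTop Filter.atTop) :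
    ∃ N₀ : ℕ, ∀ N : ℕ, N₀ ≤ N → ∀ n : ℕ, 1 ≤ n → n ≤ N - 1 →
      ∀ x : ℕ → ℝ, (∀ i, x i = -1 ∨ x i = 1) → ∀ ξ : ℝ, ξ = -1 ∨ ξ = 1 →
        0 < Sp H σ N s₀ n x ∧
        (1 - lam N) * Sp H σ N s₀ n x
          ≤ Sp H σ N s₀ (n + 1) (fun i => if i = n + 1 then ξ else x i) ∧
        (1 - lam N) * Sp H σ N s₀ (n + 1) (fun i => if i = n + 1 then ξ else x i)
          ≤ Sp H σ N s₀ n x := by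
  obtain ⟨C, hC⟩ := exists_abs_walkIncrement_le σ hH.1 (by linarith [hH.2])
  obtain ⟨N₀, hN₀⟩ := Filter.eventually_atTop.1 (hlim.eventually_ge_atTop C)
  refine ⟨N₀, fun N hN n hn hnN x hx ξ hξ => ?_⟩
  have hsign : ∀ t : ℝ, t = -1 ∨ t = 1 → |t| ≤ 1 := by
    rintro t (rfl | rfl) <;> norm_num
  set x' : ℕ → ℝ := fun i => if i = n + 1 then ξ else x i
  have hx' : ∀ i, |x' i| ≤ 1 := fun i => by
    dsimp only [x']; split_ifs; exacts [hsign ξ hξ, hsign _ (hx i)]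
  have hreturn : ∀ y : ℕ → ℝ, (∀ i, |y i| ≤ 1) → ∀ k, 1 ≤ k → k ≤ n + 1 →
      |stepReturn H σ N k y| ≤ lam N := fun y hy k hk hkn =>
    abs_stepReturn_le σ hH.1.le hk (by omega) (hC k hk y hy) (hN₀ N hN)
  have hS : 0 < Sp H σ N s₀ n x := Sp_pos σ N hs₀ fun k hk =>
    (hreturn x (fun i => hsign _ (hx i)) k (Finset.mem_Icc.1 hk).1
      (by have := (Finset.mem_Icc.1 hk).2; omega)).trans_lt (hlam N).2
  obtain ⟨hlow, hhigh⟩ := abs_le.1 (hreturn x' hx' (n + 1) (by omega) le_rfl)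
  rw [Sp_succ, Sp_congr H σ N s₀ n (y := x) fun i hi => if_neg (by
    have := (Finset.mem_Icc.1 hi).2; omega)]
  exact ⟨hS, one_sub_mul_le_mul_one_add hS.le hlow,
    one_sub_mul_mul_one_add_le hS.le hhigh (hlam N).2.le⟩

/-- Theorem 5.3: if `λ_N √N → ∞`, then for all `N` large enough, in the `N`-fractional
binary market every 1-step trade loses money after transaction costs: for every
`1 ≤ n ≤ N-1`, every sign path `x` and every sign `ξ`, the stock price is positive,
`(1-λ_N) S_n^{(N)}(x) ≤ S_{n+1}^{(N)}(x,ξ)` and `(1-λ_N) S_{n+1}^{(N)}(x,ξ) ≤ S_n^{(N)}(x)`. -/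
theorem no_one_step_asymptotic_arbitrage (H σ : ℝ) (hH : H ∈ Set.Ioo (1/2 : ℝ) 1)
    (hσ : 0 < σ) (s₀ : ℝ) (hs₀ : 0 < s₀) (lam : ℕ → ℝ)
    (hlam : ∀ N, lam N ∈ Set.Ioo (0:ℝ) 1)
    (hlim : Filter.Tendsto (fun N : ℕ => lam N * Real.sqrt N) Filter.atTop Filter.atTop) :
    ∃ N₀ : ℕ, ∀ N : ℕ, N₀ ≤ N → ∀ n : ℕ, 1 ≤ n → n ≤ N - 1 →
      ∀ x : ℕ → ℝ, (∀ i, x i = -1 ∨ x i = 1) → ∀ ξ : ℝ, ξ = -1 ∨ ξ = 1 →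
        0 < Sp H σ N s₀ n x ∧
        (1 - lam N) * Sp H σ N s₀ n x
          ≤ Sp H σ N s₀ (n + 1) (fun i => if i = n + 1 then ξ else x i) ∧
        (1 - lam N) * Sp H σ N s₀ (n + 1) (fun i => if i = n + 1 then ξ else x i)
          ≤ Sp H σ N s₀ n x :=
  no_one_step_asymptotic_arbitrage_general H σ hH s₀ hs₀ lam hlam hlim
end

section
/- Let n ≥ 2 be an integer and assume that ∑_{i=1}^{n−1} j_n(i)² ≤ σ²·(1 − c_H²/(H+1/2)²). Then the number of sign vectors x ∈ {−1,1}^{n−1} satisfying |∑_{i=1}^{n−1} j_n(i)·x_i| ≥ g_n is at most 2^{n−1}·((H+1/2)²/c_H² − 1). (In particular, the proportion of arbitrage points at level n in the fractional binary market is at most (H+1/2)²/c_H² − 1.) -/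
open MeasureTheory

/-!
Under the uniform measure on `{-1,1}^{n-1}` the coordinates are orthonormal, so the second
moment of `∑ j_n(i) x_i` is `∑ j_n(i)²`, and Chebyshev's inequality bounds the number of sign
vectors with `|∑ j_n(i) x_i| ≥ g_n` by `2^{n-1} ∑ j_n(i)² / g_n²`. It remains to bound `g_n`
from below by `σ c_H / (H + 1/2)`: in the inner integral `(y(n-x)+x)^{H-1/2} ≥ x^{H-1/2}`, which
cancels the weight `x^{1/2-H}` and leaves `∫_{n-1}^n (n-x)^{H-1/2} dx / (H-1/2)`.
-/

section RpowKernel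

open intervalIntegral

variable {p : ℝ}

lemma integral_rpow_sub_one (hp : 0 < p) : ∫ y in (0:ℝ)..1, y ^ (p - 1) = 1 / p := by
  rw [integral_rpow (Or.inl (by linarith)), Real.one_rpow, Real.zero_rpow (by linarith)]
  simp

lemma intervalIntegrable_rpow_affine_mul_rpow_sub_one (hp : 0 < p) (a b : ℝ) :
    IntervalIntegrable (fun y : ℝ => (y * a + b) ^ p * y ^ (p - 1)) volume 0 1 :=
  (intervalIntegrable_rpow' (by linarith)).continuousOn_mul
    ((continuous_id.mul_const a).add_const b |>.rpow_const fun _ => Or.inr hp.le).continuousOn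

lemma rpow_div_le_integral_rpow_affine_mul_rpow_sub_one (hp : 0 < p) {a b : ℝ}
    (ha : 0 ≤ a) (hb : 0 ≤ b) :
    b ^ p / p ≤ ∫ y in (0:ℝ)..1, (y * a + b) ^ p * y ^ (p - 1) := by
  calc b ^ p / p = ∫ y in (0:ℝ)..1, b ^ p * y ^ (p - 1) := by
        rw [intervalIntegral.integral_const_mul, integral_rpow_sub_one hp, mul_one_div]
    _ ≤ _ := by
      refine integral_mono_on zero_le_one ((intervalIntegrable_rpow' (by linarith)).const_mul _)
        (intervalIntegrable_rpow_affine_mul_rpow_sub_one hp a b) fun y ⟨hy0, _⟩ => ?_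
      gcongr
      nlinarith

lemma monotoneOn_integral_rpow_affine_mul_rpow_sub_one (hp : 0 < p) {N : ℝ} (hN : 0 ≤ N) :
    MonotoneOn (fun x => ∫ y in (0:ℝ)..1, (y * (N - x) + x) ^ p * y ^ (p - 1)) (Set.Ici 0) := by
  intro x hx x' _ hxx'
  refine integral_mono_on zero_le_one (intervalIntegrable_rpow_affine_mul_rpow_sub_one hp _ _)
    (intervalIntegrable_rpow_affine_mul_rpow_sub_one hp _ _) fun y ⟨hy0, hy1⟩ => ?_
  have hx0 : 0 ≤ x := hx
  gcongr ?_ * _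
  apply Real.rpow_le_rpow
  · nlinarith
  · nlinarith [mul_nonneg (sub_nonneg.2 hy1) (sub_nonneg.2 hxx')]
  · exact hp.le

lemma one_div_add_one_mul_le_integral (hp : 0 < p) {N : ℝ} (hN : 1 < N) :
    1 / ((p + 1) * p) ≤ ∫ x in (N - 1)..N,
      x ^ (-p) * (N - x) ^ p * ∫ y in (0:ℝ)..1, (y * (N - x) + x) ^ p * y ^ (p - 1) := by
  have hsub : Set.uIcc (N - 1) N ⊆ Set.Ioi 0 := by
    rw [Set.uIcc_of_le (by linarith)]
    exact fun x hx => Set.mem_Ioi.mpr (by linarith [hx.1])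
  have hweight : ContinuousOn (fun x : ℝ => x ^ (-p) * (N - x) ^ p) (Set.uIcc (N - 1) N) :=
    ((continuousOn_id.rpow_const fun x hx => Or.inl (hsub hx).ne').mul
      ((continuous_const.sub continuous_id).rpow_const fun _ => Or.inr hp.le).continuousOn)
  have hinner : IntervalIntegrable
      (fun x => ∫ y in (0:ℝ)..1, (y * (N - x) + x) ^ p * y ^ (p - 1)) volume (N - 1) N :=
    ((monotoneOn_integral_rpow_affine_mul_rpow_sub_one hp (by linarith)).mono
      fun x hx => Set.mem_Ici.mpr (hsub hx).le).intervalIntegrable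
  calc 1 / ((p + 1) * p) = ∫ x in (N - 1)..N, (N - x) ^ p / p := by
        rw [intervalIntegral.integral_div, integral_comp_sub_left (fun x => x ^ p), sub_self,
          sub_sub_cancel, integral_rpow (Or.inl (by linarith)), Real.one_rpow, Real.zero_rpow (by linarith)]
        field_simp
        ring
    _ ≤ _ := by
      refine integral_mono_on (by linarith)
        (((continuous_const.sub continuous_id).rpow_const fun _ => Or.inr hp.le).div_const p
          |>.intervalIntegrable _ _) (hinner.continuousOn_mul hweight) fun x hx => ?_
      have hx0 : 0 < x := hsub (Set.uIcc_of_le (by linarith : N - 1 ≤ N) ▸ hx)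
      calc (N - x) ^ p / p = x ^ (-p) * (N - x) ^ p * (x ^ p / p) := by
            rw [Real.rpow_neg hx0.le]
            field_simp
        _ ≤ _ := by
          gcongr
          · exact mul_nonneg (by positivity) (Real.rpow_nonneg (by linarith [hx.2]) _)
          exact rpow_div_le_integral_rpow_affine_mul_rpow_sub_one hp (by linarith [hx.2]) hx0.le

end RpowKernel

lemma cH_pos {H : ℝ} (hH : H ∈ Set.Ioo (1/2 : ℝ) 1) : 0 < cH H := by
  obtain ⟨h1, h2⟩ := hH
  unfold cH
  have := Real.Gamma_pos_of_pos (by linarith : 0 < 3/2 - H)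
  have := Real.Gamma_pos_of_pos (by linarith : 0 < H + 1/2)
  have := Real.Gamma_pos_of_pos (by linarith : 0 < 2 - 2 * H)
  positivity

lemma div_le_gn {H σ : ℝ} (hH : 1/2 < H) (hσ : 0 ≤ σ) {n : ℕ} (hn : 2 ≤ n) :
    σ * cH H / (H + 1/2) ≤ gn H σ n := by
  have hp : 0 < H - 1/2 := by linarith
  have hN : (1 : ℝ) < n := by exact_mod_cast hn
  have hI := one_div_add_one_mul_le_integral hp hN
  rw [show H - 1/2 + 1 = H + 1/2 by ring, show H - 1/2 - 1 = H - 3/2 by ring,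
    show -(H - 1/2) = 1/2 - H by ring] at hI
  unfold gn
  calc σ * cH H / (H + 1/2) = σ * cH H * (H - 1/2) * (1 / ((H + 1/2) * (H - 1/2))) := by
        rw [mul_one_div, mul_div_mul_right _ _ hp.ne']
    _ ≤ _ := by
      have hc : 0 ≤ cH H := Real.sqrt_nonneg _
      gcongr

section SignVectors

open Finset

variable {ι : Type*} [Fintype ι] [DecidableEq ι]

noncomputable def signVectors (ι : Type*) [Fintype ι] [DecidableEq ι] : Finset (ι → ℝ) :=
  Fintype.piFinset fun _ => {-1, 1}

lemma mem_signVectors {x : ι → ℝ} : x ∈ signVectors ι ↔ ∀ i, x i = -1 ∨ x i = 1 := by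
  simp [signVectors]

lemma card_signVectors : #(signVectors ι) = 2 ^ Fintype.card ι := by
  simp [signVectors, Fintype.card_piFinset, card_pair (show (-1 : ℝ) ≠ 1 by norm_num)]

lemma sum_signVectors_mul_apply (i k : ι) :
    ∑ x ∈ signVectors ι, x i * x k = if i = k then 2 ^ Fintype.card ι else 0 := by
  split_ifs with hik
  · subst hik
    rw [sum_congr rfl fun x hx => ?_, sum_const, card_signVectors, nsmul_one]
    · norm_cast
    rcases mem_signVectors.mp hx i with h | h <;> simp [h]
  · -- `x i * x k` is a product of one-coordinate factors, and the factor at `i` averages to zero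
    have hprod := prod_univ_sum (fun _ : ι => ({-1, 1} : Finset ℝ))
      fun j a => (if j = i then a else 1) * (if j = k then a else 1)
    simp only [prod_mul_distrib, prod_ite_eq', mem_univ, if_true] at hprod
    rw [signVectors, ← hprod]
    exact prod_eq_zero (mem_univ i) (by simp [hik, sum_pair (show (-1 : ℝ) ≠ 1 by norm_num)])

lemma sum_signVectors_sq_sum_mul (a : ι → ℝ) :
    ∑ x ∈ signVectors ι, (∑ i, a i * x i) ^ 2 = 2 ^ Fintype.card ι * ∑ i, a i ^ 2 := by
  calc ∑ x ∈ signVectors ι, (∑ i, a i * x i) ^ 2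
      = ∑ i, ∑ k, a i * a k * ∑ x ∈ signVectors ι, x i * x k := by
        simp_rw [sq, sum_mul_sum, mul_sum]
        rw [sum_comm]
        refine sum_congr rfl fun i _ => ?_
        rw [sum_comm]
        exact sum_congr rfl fun k _ => sum_congr rfl fun x _ => by ring
    _ = 2 ^ Fintype.card ι * ∑ i, a i ^ 2 := by
        simp_rw [sum_signVectors_mul_apply, mul_ite, mul_zero, sum_ite_eq, mem_univ, if_true,
          mul_sum]
        exact sum_congr rfl fun i _ => by ring

lemma card_filter_le_abs_mul_sq_le_sum_sq {α : Type*} (s : Finset α) (f : α → ℝ) {c : ℝ}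
    (hc : 0 ≤ c) : #{x ∈ s | c ≤ |f x|} * c ^ 2 ≤ ∑ x ∈ s, f x ^ 2 := by
  calc #{x ∈ s | c ≤ |f x|} * c ^ 2 ≤ ∑ x ∈ s with c ≤ |f x|, f x ^ 2 := by
        rw [← nsmul_eq_mul]
        refine card_nsmul_le_sum _ _ _ fun x hx => ?_
        rw [← sq_abs (f x)]
        exact pow_le_pow_left₀ hc (mem_filter.mp hx).2 2
    _ ≤ ∑ x ∈ s, f x ^ 2 :=
        sum_le_sum_of_subset_of_nonneg (filter_subset _ _) fun x _ _ => sq_nonneg _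

lemma natCard_le_abs_sum_mul_sign_mul_sq_le (a : ι → ℝ) {c : ℝ} (hc : 0 ≤ c) :
    Nat.card {x : ι → ℝ // (∀ i, x i = -1 ∨ x i = 1) ∧ c ≤ |∑ i, a i * x i|} * c ^ 2
      ≤ 2 ^ Fintype.card ι * ∑ i, a i ^ 2 := by
  have hcard : Nat.card {x : ι → ℝ // (∀ i, x i = -1 ∨ x i = 1) ∧ c ≤ |∑ i, a i * x i|}
      = #{x ∈ signVectors ι | c ≤ |∑ i, a i * x i|} := by
    simp only [← Nat.card_eq_finsetCard, mem_filter, mem_signVectors]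
  rw [hcard, ← sum_signVectors_sq_sum_mul]
  exact card_filter_le_abs_mul_sq_le_sum_sq _ _ hc

end SignVectors

lemma sum_fin_add_one_eq_sum_Icc {M : Type*} [AddCommMonoid M] (f : ℕ → M) (m : ℕ) :
    ∑ i : Fin m, f (i + 1) = ∑ i ∈ Finset.Icc 1 m, f i := by
  rw [Fin.sum_univ_eq_sum_range (fun i => f (i + 1)), ← Finset.Ico_add_one_right_eq_Icc,
    Finset.sum_Ico_eq_sum_range]
  simp [add_comm]

/-- Lemma 5.4 (`apap`), quantitative form: under the variance bound
`∑_{i=1}^{n-1} j_n(i)² ≤ σ² (1 - c_H²/(H+1/2)²)`, the number of sign vectors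
`x ∈ {-1,1}^{n-1}` with `|∑_{i=1}^{n-1} j_n(i) x_i| ≥ g_n` (the arbitrage points at
level `n`) is at most `2^{n-1} ((H+1/2)²/c_H² - 1)`. -/
theorem arbitrage_points_bound (H σ : ℝ) (hH : H ∈ Set.Ioo (1/2 : ℝ) 1) (hσ : 0 < σ)
    (n : ℕ) (hn : 2 ≤ n)
    (hvar : ∑ i ∈ Finset.Icc 1 (n - 1), (jn H σ n i) ^ 2
      ≤ σ ^ 2 * (1 - (cH H) ^ 2 / (H + 1/2) ^ 2)) :
    (Nat.card {x : Fin (n - 1) → ℝ // (∀ i, x i = -1 ∨ x i = 1) ∧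
        gn H σ n ≤ |∑ i : Fin (n - 1), jn H σ n ((i : ℕ) + 1) * x i|} : ℝ)
      ≤ 2 ^ (n - 1) * ((H + 1/2) ^ 2 / (cH H) ^ 2 - 1) := by
  set N := Nat.card {x : Fin (n - 1) → ℝ // (∀ i, x i = -1 ∨ x i = 1) ∧
    gn H σ n ≤ |∑ i : Fin (n - 1), jn H σ n ((i : ℕ) + 1) * x i|}
  have hcH := cH_pos hH
  have hH' : 0 < H + 1/2 := by linarith [hH.1]
  have hc : 0 < σ * cH H / (H + 1/2) := by positivity
  have hcg : σ * cH H / (H + 1/2) ≤ gn H σ n := div_le_gn hH.1 hσ.le hn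
  have hcount : N * (σ * cH H / (H + 1/2)) ^ 2
      ≤ 2 ^ (n - 1) * (σ ^ 2 * (1 - cH H ^ 2 / (H + 1/2) ^ 2)) := calc
    _ ≤ N * gn H σ n ^ 2 := by gcongr
    _ ≤ 2 ^ (n - 1) * ∑ i ∈ Finset.Icc 1 (n - 1), jn H σ n i ^ 2 := by
      simpa [sum_fin_add_one_eq_sum_Icc fun i => jn H σ n i ^ 2] using
        natCard_le_abs_sum_mul_sign_mul_sq_le (fun i : Fin (n - 1) => jn H σ n ((i : ℕ) + 1))
          (hc.le.trans hcg)
    _ ≤ _ := by gcongr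
  rw [← le_div_iff₀ (by positivity)] at hcount
  refine hcount.trans_eq ?_
  generalize H + 1/2 = h at hH' ⊢
  field_simp
end

section
/- Fix an integer n ≥ 1, an integer N ≥ n+1, s₀ > 0, and assume S_n^{(N)}(x) > 0 for every x ∈ {−1,1}^n. Let A ⊆ {−1,1}^n, let q : {−1,1}^n → [0,∞), let α > 0, and define ε(x) := 1 if x ∈ A and ε(x) := −1 otherwise. For (x,ξ) ∈ {−1,1}^n × {−1,1} define V(x,ξ) := −ε(x)·q(x)·S_n^{(N)}(x)·(∑_{i=1}^{n} j_{n+1}(i)·x_i + g_{n+1}·ξ)/N^H. Then the number of pairs (x,ξ) ∈ {−1,1}^n × {−1,1} with V(x,ξ) ≥ α is at most 2^n + #{x ∈ {−1,1}^n : |∑_{i=1}^{n} j_{n+1}(i)·x_i| ≥ g_{n+1}}. (Hence, under the uniform measure on {−1,1}^{n+1}, the probability that a 1-step frictionless strategy's terminal value is at least α is at most (1 + ν_H)/2, where ν_H := sup_m #{x ∈ {−1,1}^{m−1} : |∑_{i=1}^{m−1} j_m(i)x_i| ≥ g_m}/2^{m−1}; so if ν_H < 1 there is no 1-step asymptotic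 arbitrage of the second kind in the frictionless fractional binary markets.) -/
open MeasureTheory

/-- The stock price in the `N`-fractional binary market along a sign vector
`x ∈ {-1,1}^n` (Fin-indexed):
`S_n^{(N)}(x) = s₀ ∏_{k=1}^n (1 + (∑_{i=1}^{k-1} j_k(i) x_i + g_k x_k)/N^H)`. -/
noncomputable def SpF (H σ : ℝ) (N : ℕ) (s₀ : ℝ) {n : ℕ} (x : Fin n → ℝ) : ℝ :=
  s₀ * ∏ k : Fin n,
    (1 + ((∑ i ∈ Finset.univ.filter (fun i : Fin n => (i : ℕ) < (k : ℕ)),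
          jn H σ ((k : ℕ) + 1) ((i : ℕ) + 1) * x i)
        + gn H σ ((k : ℕ) + 1) * x k) / (N : ℝ) ^ H)

/-!
A value `c · (J + g ξ)` that is positive for both `ξ = 1` and `ξ = -1` forces `J + g` and
`J - g` to have the sign of `c`, hence `g ≤ |J|`. So a sign vector `x` with `|J(x)| < g` admits
at most one `ξ` with `V(x, ξ) ≥ α > 0`, and every other `x` at most two; counting fibrewise
gives `2^n + #{x : g ≤ |J(x)|}`.
-/

theorem le_abs_of_mul_add_pos_of_mul_sub_pos {R : Type*} [Ring R] [LinearOrder R]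
    [IsStrictOrderedRing R] {c S G : R} (hadd : 0 < c * (S + G)) (hsub : 0 < c * (S - G)) :
    G ≤ |S| := by
  by_contra! h
  obtain ⟨hl, hr⟩ := abs_lt.mp h
  have hc : 0 < c := (pos_iff_pos_of_mul_pos hadd).2 (neg_lt_iff_pos_add.1 hl)
  exact hsub.not_gt (mul_neg_of_pos_of_neg hc (sub_neg.2 hr))

theorem card_pi_eq_or_eq {ι α : Type*} [Fintype ι] {a b : α} (hab : a ≠ b) :
    Nat.card {x : ι → α // ∀ i, x i = a ∨ x i = b} = 2 ^ Fintype.card ι := by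
  have hpair : Nat.card {y // y = a ∨ y = b} = 2 := Set.ncard_pair hab
  rw [Nat.card_congr (Equiv.subtypePiEquivPi (p := fun _ y => y = a ∨ y = b)), Nat.card_pi]
  simp [hpair]

theorem card_le_card_add_card_of_both_imp {α β : Type*} {S B : α → Prop}
    [Finite {a // S a}] {Q : α × β → Prop} {u v : β}
    (hQ : ∀ p, Q p → S p.1 ∧ (p.2 = u ∨ p.2 = v)) (hboth : ∀ a, Q (a, u) → Q (a, v) → B a) :
    Nat.card {p // Q p} ≤ Nat.card {a // S a} + Nat.card {a // S a ∧ B a} := by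
  classical
  have : Finite {a // S a ∧ B a} :=
    Finite.of_injective (fun a => (⟨a.1, a.2.1⟩ : {a // S a})) fun _ _ h =>
      Subtype.ext (Subtype.mk.inj h)
  let F : {p // Q p} → {a // S a} ⊕ {a // S a ∧ B a} := fun p =>
    if h : B p.1.1 ∧ p.1.2 = u then .inr ⟨p.1.1, (hQ p.1 p.2).1, h.1⟩
    else .inl ⟨p.1.1, (hQ p.1 p.2).1⟩
  have hF : Function.Injective F := by
    rintro ⟨⟨a, b⟩, hab⟩ ⟨⟨a', b'⟩, hab'⟩ hFF
    dsimp only [F] at hFF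
    split_ifs at hFF with h h' h'
    · obtain rfl : a = a' := congrArg Subtype.val (Sum.inr_injective hFF)
      exact Subtype.ext (Prod.ext rfl (h.2.trans h'.2.symm))
    · obtain rfl : a = a' := congrArg Subtype.val (Sum.inl_injective hFF)
      refine Subtype.ext (Prod.ext rfl ?_)
      rcases (hQ _ hab).2 with rfl | rfl <;> rcases (hQ _ hab').2 with rfl | rfl
      · rfl
      · exact absurd ⟨hboth a hab hab', rfl⟩ h
      · exact absurd ⟨hboth a hab' hab, rfl⟩ h'
      · rfl
  calc _ ≤ Nat.card ({a // S a} ⊕ {a // S a ∧ B a}) := Nat.card_le_card_of_injective F hF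
    _ = _ := Nat.card_sum

open scoped Classical in
theorem one_step_value_counting_general (H σ : ℝ)
    (n N : ℕ) (s₀ : ℝ)
    (A : Set (Fin n → ℝ)) (q : (Fin n → ℝ) → ℝ)
    (α : ℝ) (hα : 0 < α) :
    Nat.card {p : (Fin n → ℝ) × ℝ //
        (∀ i, p.1 i = -1 ∨ p.1 i = 1) ∧ (p.2 = -1 ∨ p.2 = 1) ∧
        α ≤ -(if p.1 ∈ A then (1:ℝ) else -1) * q p.1 * SpF H σ N s₀ p.1 *
            (((∑ i : Fin n, jn H σ (n + 1) ((i : ℕ) + 1) * p.1 i)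
              + gn H σ (n + 1) * p.2) / (N : ℝ) ^ H)}
      ≤ 2 ^ n + Nat.card {x : Fin n → ℝ //
          (∀ i, x i = -1 ∨ x i = 1) ∧
          gn H σ (n + 1) ≤ |∑ i : Fin n, jn H σ (n + 1) ((i : ℕ) + 1) * x i|} := by
  have hsigns : Nat.card {x : Fin n → ℝ // ∀ i, x i = -1 ∨ x i = 1} = 2 ^ n := by
    simpa using card_pi_eq_or_eq (ι := Fin n) (by norm_num : (-1 : ℝ) ≠ 1)
  have : Finite {x : Fin n → ℝ // ∀ i, x i = -1 ∨ x i = 1} :=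
    Nat.finite_of_card_ne_zero (by simp [hsigns])
  rw [← hsigns]
  refine card_le_card_add_card_of_both_imp (u := -1) (v := 1) (fun p hp => ⟨hp.1, hp.2.1⟩)
    fun x hminus hplus => le_abs_of_mul_add_pos_of_mul_sub_pos
      (c := -(if x ∈ A then (1 : ℝ) else -1) * q x * SpF H σ N s₀ x / (N : ℝ) ^ H) ?_ ?_
  · convert hα.trans_le hplus.2.2 using 1
    ring
  · convert hα.trans_le hminus.2.2 using 1
    ring

open scoped Classical in
/-- The key counting estimate in Theorem 5.5 (`aa2fc`): for a 1-step frictionless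
strategy going short on `A` and long on `Aᶜ` with `q(x) ≥ 0` units of stock, the number
of scenarios `(x,ξ) ∈ {-1,1}^n × {-1,1}` in which the terminal value
`V(x,ξ) = -ε(x) q(x) S_n^{(N)}(x) (∑_{i=1}^n j_{n+1}(i) x_i + g_{n+1} ξ)/N^H` is at
least `α > 0` is bounded by `2^n` plus the number of arbitrage points at level `n+1`. -/
theorem one_step_value_counting (H σ : ℝ) (hH : H ∈ Set.Ioo (1/2 : ℝ) 1) (hσ : 0 < σ)
    (n N : ℕ) (hn : 1 ≤ n) (hN : n + 1 ≤ N) (s₀ : ℝ) (hs₀ : 0 < s₀)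
    (hSpos : ∀ x : Fin n → ℝ, (∀ i, x i = -1 ∨ x i = 1) → 0 < SpF H σ N s₀ x)
    (A : Set (Fin n → ℝ)) (q : (Fin n → ℝ) → ℝ) (hq : ∀ x, 0 ≤ q x)
    (α : ℝ) (hα : 0 < α) :
    Nat.card {p : (Fin n → ℝ) × ℝ //
        (∀ i, p.1 i = -1 ∨ p.1 i = 1) ∧ (p.2 = -1 ∨ p.2 = 1) ∧
        α ≤ -(if p.1 ∈ A then (1:ℝ) else -1) * q p.1 * SpF H σ N s₀ p.1 *
            (((∑ i : Fin n, jn H σ (n + 1) ((i : ℕ) + 1) * p.1 i)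
              + gn H σ (n + 1) * p.2) / (N : ℝ) ^ H)}
      ≤ 2 ^ n + Nat.card {x : Fin n → ℝ //
          (∀ i, x i = -1 ∨ x i = 1) ∧
          gn H σ (n + 1) ≤ |∑ i : Fin n, jn H σ (n + 1) ((i : ℕ) + 1) * x i|} :=
  one_step_value_counting_general H σ n N s₀ A q α hα
end
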